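/- arXiv:2206.11778 — 9 statements merged into one kernel-verified Lean document; each statement's English description precedes it below -/
import Mathlib

section
/- Let n be a squarefree positive integer and ζ_n a primitive n-th root of unity in ℂ. Then the set {ζ_n^k : 1 ≤ k ≤ n, gcd(k,n) = 1} of all primitive n-th roots of unity is linearly independent over ℚ. -/
/-! The `φ(n)` primitive `n`-th roots of unity lie in `ℚ(ζ)`, which has dimension `φ(n)` over `ℚ`,
so it suffices that they span it. A power `ζ^m` has some order `d ∣ n`, and `n = d e` with `d`, `e`
coprime since `n` is squarefree. Multiplying `ζ^m` by the primitive `e`-th roots gives primitive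
`n`-th roots, and these products sum to `μ(e) ζ^m`, where `μ(e) ≠ 0` again because `n` is
squarefree. -/

open Polynomial Finset ArithmeticFunction
open scoped ArithmeticFunction.Moebius

namespace IsPrimitiveRoot

section IsDomain

variable {R : Type*} [CommRing R] [IsDomain R] {ζ : R} {n : ℕ}

theorem sum_nthRootsFinset_one (hζ : IsPrimitiveRoot ζ n) :
    ∑ x ∈ nthRootsFinset n (1 : R), x = if n = 1 then 1 else 0 := by
  classical
  rcases n.eq_zero_or_pos with rfl | hn
  · simp
  rw [nthRootsFinset_def, ← Multiset.toFinset_eq hζ.nthRoots_one_nodup, Finset.sum_mk,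
    hζ.nthRoots_eq (one_pow n)]
  split_ifs with h1
  · simp [h1]
  · simpa [sum_eq_multiset_sum] using hζ.geom_sum_eq_zero (by omega)

theorem sum_primitiveRoots_eq_moebius (hζ : IsPrimitiveRoot ζ n) :
    ∑ x ∈ primitiveRoots n R, x = μ n := by
  classical
  rcases n.eq_zero_or_pos with rfl | hn
  · simp
  have hdiv : ∀ d > 0, d ∣ n → ∑ i ∈ d.divisors, ∑ x ∈ primitiveRoots i R, x =
      if d = 1 then 1 else 0 := by
    rintro d - ⟨c, rfl⟩
    rw [← sum_biUnion fun i _ j _ hij ↦ disjoint hij, ← nthRoots_one_eq_biUnion_primitiveRoots]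
    exact (hζ.pow hn (mul_comm d c)).sum_nthRootsFinset_one
  have hinv :=
    (sum_eq_iff_sum_mul_moebius_eq_on {d | d ∣ n} fun _ _ ↦ dvd_trans).1 hdiv n hn dvd_rfl
  rw [← hinv, Nat.sum_divisorsAntidiagonal' fun a b ↦ (μ a : R) * if b = 1 then 1 else 0,
    sum_eq_single 1 (fun d _ hd ↦ by simp [hd]) (by simp [hn.ne']), if_pos rfl, Nat.div_one,
    mul_one]

end IsDomain

theorem mul_of_coprime {M : Type*} [CommMonoid M] {x y : M} {a b : ℕ} (hx : IsPrimitiveRoot x a)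
    (hy : IsPrimitiveRoot y b) (hab : a.Coprime b) : IsPrimitiveRoot (x * y) (a * b) := by
  rw [IsPrimitiveRoot.iff_orderOf] at hx hy ⊢
  rw [(Commute.all x y).orderOf_mul_eq_mul_orderOf_of_coprime (hx ▸ hy ▸ hab), hx, hy]

theorem injOn_pow_Ioc {M : Type*} [CommMonoid M] {ζ : M} {n : ℕ} (hζ : IsPrimitiveRoot ζ n) :
    Set.InjOn (ζ ^ ·) (Set.Ioc 0 n) := by
  have hpred : ∀ c ∈ Set.Ioc 0 n, ζ ^ (c - 1) = ζ ^ c * ζ ^ (n - 1) := fun c hc ↦ by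
    rw [← pow_add, show c + (n - 1) = c - 1 + n by grind, pow_add, hζ.pow_eq_one, mul_one]
  intro a ha b hb (hab : ζ ^ a = ζ ^ b)
  have := hζ.pow_inj (i := a - 1) (j := b - 1) (by grind) (by grind)
    (by rw [hpred a ha, hpred b hb, hab])
  grind

section RatAlgebra

variable {K : Type*} [CommRing K] [IsDomain K] [Algebra ℚ K] {ζ : K} {n : ℕ}

theorem pow_mem_span_primitiveRoots (hζ : IsPrimitiveRoot ζ n) (hsf : Squarefree n) (m : ℕ) :
    ζ ^ m ∈ Submodule.span ℚ (primitiveRoots n K : Set K) := by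
  have hn : 0 < n := Nat.pos_of_ne_zero hsf.ne_zero
  set d := orderOf (ζ ^ m)
  obtain ⟨e, he⟩ : d ∣ n := orderOf_dvd_of_pow_eq_one <| by
    rw [← pow_mul, mul_comm, pow_mul, hζ.pow_eq_one, one_pow]
  have hde : d.Coprime e := (Nat.squarefree_mul_iff.1 (he ▸ hsf)).1
  have hμ : (μ e : ℚ) ≠ 0 := by
    have he_sf : Squarefree e := hsf.squarefree_of_dvd (Dvd.intro_left d he.symm)
    exact_mod_cast moebius_ne_zero_iff_squarefree.2 he_sf
  have hsum : (μ e : ℚ) • ζ ^ m ∈ Submodule.span ℚ (primitiveRoots n K : Set K) := by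
    rw [Algebra.smul_def, map_intCast, ← (hζ.pow hn he).sum_primitiveRoots_eq_moebius, sum_mul]
    refine Submodule.sum_mem _ fun x hx ↦ Submodule.subset_span ?_
    rw [mem_coe, mem_primitiveRoots hn, he, mul_comm x]
    exact (IsPrimitiveRoot.orderOf _).mul_of_coprime (isPrimitiveRoot_of_mem_primitiveRoots hx) hde
  simpa [smul_smul, hμ] using Submodule.smul_mem _ (μ e : ℚ)⁻¹ hsum

theorem span_primitiveRoots_eq_adjoin (hζ : IsPrimitiveRoot ζ n) (hsf : Squarefree n) :
    Submodule.span ℚ (primitiveRoots n K : Set K) =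
      Subalgebra.toSubmodule (Algebra.adjoin ℚ {ζ}) := by
  have : NeZero n := ⟨hsf.ne_zero⟩
  refine le_antisymm (Submodule.span_le.2 fun x hx ↦ ?_) ?_
  · obtain ⟨i, -, rfl⟩ :=
      hζ.eq_pow_of_pow_eq_one (isPrimitiveRoot_of_mem_primitiveRoots hx).pow_eq_one
    exact Subalgebra.pow_mem _ (Algebra.self_mem_adjoin_singleton ℚ ζ) i
  · rw [Algebra.adjoin_eq_span, ← Submonoid.powers_eq_closure, Submodule.span_le]
    rintro _ ⟨m, rfl⟩
    exact hζ.pow_mem_span_primitiveRoots hsf m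

theorem linearIndependent_primitiveRoots (hζ : IsPrimitiveRoot ζ n) (hsf : Squarefree n) :
    LinearIndependent ℚ ((↑) : primitiveRoots n K → K) := by
  have : NeZero n := ⟨hsf.ne_zero⟩
  have := hζ.adjoin_isCyclotomicExtension ℚ
  rw [linearIndependent_iff_card_eq_finrank_span, Subtype.range_coe_subtype,
    Finset.setOfPred_mem, Set.finrank, hζ.span_primitiveRoots_eq_adjoin hsf,
    Subalgebra.finrank_toSubmodule,
    IsCyclotomicExtension.finrank _ (cyclotomic.irreducible_rat (NeZero.pos n)), Fintype.card_coe,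
    hζ.card_primitiveRoots]

end RatAlgebra

end IsPrimitiveRoot

theorem primitiveRoots_linearIndependent_of_squarefree_general (n : ℕ)
    (hsf : Squarefree n) :
    LinearIndependent ℚ
      (fun k : {k : ℕ // 1 ≤ k ∧ k ≤ n ∧ Nat.gcd k n = 1} =>
        Complex.exp (2 * Real.pi * Complex.I / n) ^ (k : ℕ)) := by
  set ζ := Complex.exp (2 * Real.pi * Complex.I / n)
  have hn : 0 < n := Nat.pos_of_ne_zero hsf.ne_zero
  have hζ : IsPrimitiveRoot ζ n := Complex.isPrimitiveRoot_exp n hsf.ne_zero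
  let f (k : {k : ℕ // 1 ≤ k ∧ k ≤ n ∧ Nat.gcd k n = 1}) : primitiveRoots n ℂ :=
    ⟨ζ ^ k.1, (mem_primitiveRoots hn).2 (hζ.pow_of_coprime k.1 k.2.2.2)⟩
  have hf : Function.Injective f := fun a b hab ↦
    Subtype.ext <| hζ.injOn_pow_Ioc ⟨a.2.1, a.2.2.1⟩ ⟨b.2.1, b.2.2.1⟩ (congrArg Subtype.val hab)
  exact (hζ.linearIndependent_primitiveRoots hsf).comp f hf

/-- For squarefree `n`, the primitive `n`-th roots of unity
`{ζₙ^k : 1 ≤ k ≤ n, gcd(k,n) = 1}` are linearly independent over `ℚ`. -/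
theorem primitiveRoots_linearIndependent_of_squarefree (n : ℕ) (hn : 0 < n)
    (hsf : Squarefree n) :
    LinearIndependent ℚ
      (fun k : {k : ℕ // 1 ≤ k ∧ k ≤ n ∧ Nat.gcd k n = 1} =>
        Complex.exp (2 * Real.pi * Complex.I / n) ^ (k : ℕ)) :=
  primitiveRoots_linearIndependent_of_squarefree_general n hsf
end

section
/- Let p be an odd prime and ζ = exp(2πi/(4p)) a primitive 4p-th root of unity. Then the set {ζ^k : 1 ≤ k ≤ 2p, gcd(k, 2p) = 1} is linearly independent over ℚ. -/
/-- For an odd prime `p` and `ζ = exp(2πi/(4p))`, the set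
`{ζ^k : 1 ≤ k ≤ 2p, gcd(k, 2p) = 1}` is linearly independent over `ℚ`. -/
theorem linearIndependent_pow_root_four_mul_prime (p : ℕ) (hp : p.Prime) (hodd : Odd p) :
    LinearIndependent ℚ
      (fun k : {k : ℕ // 1 ≤ k ∧ k ≤ 2 * p ∧ Nat.gcd k (2 * p) = 1} =>
        Complex.exp (2 * Real.pi * Complex.I / (4 * p)) ^ (k : ℕ)) := by
  have hp2 : 2 ≤ p := hp.two_le
  have hpodd : p % 2 = 1 := Nat.odd_iff.mp hodd
  have hp3 : 3 ≤ p := by omega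
  set θ : ℂ := Complex.exp (2 * Real.pi * Complex.I / (4 * p)) with hθdef
  have hθ : IsPrimitiveRoot θ (4 * p) := by
    have h := Complex.isPrimitiveRoot_exp (4 * p) (by omega)
    have hc : ((4 * p : ℕ) : ℂ) = 4 * (p : ℂ) := by push_cast; ring
    rw [hc] at h
    exact h
  set m : ℕ := (p - 1) / 2 with hmdef
  have hpm : p = 2 * m + 1 := by omega
  -- η is a primitive p-th root of unity
  set η : ℂ := θ ^ (2 * p + 2) with hηdef
  have hη4 : η = (θ ^ 4) ^ ((p + 1) / 2) := by
    rw [hηdef, ← pow_mul]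
    congr 1
    omega
  have hη : IsPrimitiveRoot η p := by
    rw [hη4]
    refine (hθ.pow (by omega) rfl).pow_of_coprime _ ?_
    rw [Nat.coprime_comm]
    refine hp.coprime_iff_not_dvd.mpr (fun h => ?_)
    have := Nat.le_of_dvd (by omega) h
    omega
  have hθ0 : θ ≠ 0 := hθ.ne_zero (by omega)
  have hη0 : η ≠ 0 := hη.ne_zero (by omega)
  have hθ4p : θ ^ (4 * p) = 1 := hθ.pow_eq_one
  have hpowmod : ∀ a s : ℕ, θ ^ (a + 4 * p * s) = θ ^ a := by
    intro a s
    rw [pow_add, pow_mul, hθ4p, one_pow, mul_one]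
  have hm1 : (-1 : ℂ) = θ ^ (2 * p) := by
    have hne : θ ^ (2 * p) ≠ 1 := hθ.pow_ne_one_of_pos_of_lt (by omega) (by omega)
    have hsq : θ ^ (2 * p) * θ ^ (2 * p) = 1 := by
      rw [← pow_add, show 2 * p + 2 * p = 4 * p from by ring, hθ4p]
    rcases mul_self_eq_one_iff.mp hsq with h | h
    · exact absurd h hne
    · exact h.symm
  -- linear independence of powers of η
  have hdeg : (minpoly ℚ η).natDegree = p - 1 := by
    rw [← Polynomial.cyclotomic_eq_minpoly_rat hη (by omega),
      Polynomial.natDegree_cyclotomic, Nat.totient_prime hp]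
  have hli : LinearIndependent ℚ fun i : Fin (p - 1) => η ^ (i : ℕ) := by
    have h := linearIndependent_pow (K := ℚ) (S := ℂ) η
    rwa [hdeg] at h
  set c : ℂ := θ * η ^ (m + 1) with hcdef
  have hc0 : c ≠ 0 := mul_ne_zero hθ0 (pow_ne_zero _ hη0)
  have hliw : LinearIndependent ℚ fun i : Fin (p - 1) => c * η ^ (i : ℕ) :=
    hli.map' (LinearMap.mulLeft ℚ c)
      (LinearMap.ker_eq_bot.mpr (mul_right_injective₀ hc0))
  -- facts about the index set
  have hj_facts : ∀ k : ℕ, 1 ≤ k → k ≤ 2 * p → Nat.gcd k (2 * p) = 1 →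
      (k = 2 * ((k - 1) / 2) + 1 ∧ (k - 1) / 2 ≤ p - 1 ∧ (k - 1) / 2 ≠ m) := by
    intro k hk1 hk2 hk3
    have h2 : ¬ (2 ∣ k) := by
      intro h
      have : 2 ∣ Nat.gcd k (2 * p) := Nat.dvd_gcd h ⟨p, rfl⟩
      omega
    have hdp : ¬ (p ∣ k) := by
      intro h
      have : p ∣ Nat.gcd k (2 * p) := Nat.dvd_gcd h ⟨2, by ring⟩
      have := Nat.le_of_dvd (by omega) this
      omega
    have hko : k % 2 = 1 := by omega
    have hknp : k ≠ p := fun h => hdp (h ▸ dvd_refl p)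
    have hkne2p : k ≠ 2 * p := by
      intro h
      exact h2 (h ▸ ⟨p, rfl⟩)
    refine ⟨by omega, by omega, fun h => hknp (by omega)⟩
  -- the index map
  set t : {k : ℕ // 1 ≤ k ∧ k ≤ 2 * p ∧ Nat.gcd k (2 * p) = 1} → Fin (p - 1) :=
    fun k => ⟨if ((k : ℕ) - 1) / 2 < m then ((k : ℕ) - 1) / 2 + m
              else ((k : ℕ) - 1) / 2 - m - 1, by
      obtain ⟨hj1, hj2, hj3⟩ := hj_facts (k : ℕ) k.2.1 k.2.2.1 k.2.2.2
      split <;> omega⟩ with htdef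
  have htinj : Function.Injective t := by
    intro k1 k2 h
    obtain ⟨hk1e, hk1b, hk1m⟩ := hj_facts (k1 : ℕ) k1.2.1 k1.2.2.1 k1.2.2.2
    obtain ⟨hk2e, hk2b, hk2m⟩ := hj_facts (k2 : ℕ) k2.2.1 k2.2.2.1 k2.2.2.2
    have hval : (t k1 : ℕ) = (t k2 : ℕ) := congrArg Fin.val h
    simp only [htdef] at hval
    have : (k1 : ℕ) = (k2 : ℕ) := by
      split_ifs at hval <;> omega
    exact Subtype.ext this
  -- units
  set ε : {k : ℕ // 1 ≤ k ∧ k ≤ 2 * p ∧ Nat.gcd k (2 * p) = 1} → ℚˣ :=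
    fun k => (-1) ^ (((k : ℕ) - 1) / 2) with hεdef
  have key : ∀ k : {k : ℕ // 1 ≤ k ∧ k ≤ 2 * p ∧ Nat.gcd k (2 * p) = 1},
      θ ^ (k : ℕ) = ε k • (c * η ^ ((t k : ℕ))) := by
    intro k
    obtain ⟨hke, hkb, hkm⟩ := hj_facts (k : ℕ) k.2.1 k.2.2.1 k.2.2.2
    set j : ℕ := ((k : ℕ) - 1) / 2 with hjdef
    have hsmul : ε k • (c * η ^ ((t k : ℕ))) = (-1 : ℂ) ^ j * (c * η ^ ((t k : ℕ))) := by
      rw [hεdef]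
      simp only [Units.smul_def, Units.val_pow_eq_pow_val, Units.val_neg, Units.val_one]
      rw [Rat.smul_def]
      push_cast
      ring
    have hcollect : (-1 : ℂ) ^ j * (c * η ^ ((t k : ℕ))) =
        θ ^ (2 * p * j + 1 + (2 * p + 2) * (m + 1) + (2 * p + 2) * ((t k : ℕ))) := by
      rw [hm1, hcdef, hηdef]
      ring
    rw [hsmul, hcollect]
    by_cases hlt : j < m
    · have htv : ((t k : ℕ)) = j + m := by
        simp only [htdef, ← hjdef, if_pos hlt]
      rw [htv, show (k : ℕ) = 2 * j + 1 from hke,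
        show 2 * p * j + 1 + (2 * p + 2) * (m + 1) + (2 * p + 2) * (j + m) =
          (2 * j + 1) + 4 * p * (j + m + 1) from by rw [hpm]; ring,
        hpowmod]
    · have hgt : m < j := by omega
      obtain ⟨d, hd⟩ : ∃ d, j = m + 1 + d := ⟨j - m - 1, by omega⟩
      have htv : ((t k : ℕ)) = d := by
        simp only [htdef]
        split <;> omega
      rw [htv, show (k : ℕ) = 2 * j + 1 from hke,
        show 2 * p * j + 1 + (2 * p + 2) * (m + 1) + (2 * p + 2) * d =
          (2 * j + 1) + 4 * p * j from by rw [hd]; ring,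
        hpowmod]
  have hfun : (fun k : {k : ℕ // 1 ≤ k ∧ k ≤ 2 * p ∧ Nat.gcd k (2 * p) = 1} =>
      θ ^ (k : ℕ)) = fun k : {k : ℕ // 1 ≤ k ∧ k ≤ 2 * p ∧ Nat.gcd k (2 * p) = 1} => ε k • ((fun i : Fin (p - 1) => c * η ^ (i : ℕ)) ∘ t) k := by
    funext k
    exact key k
  rw [hfun]
  exact (hliw.comp t htinj).units_smul ε
end

section
/- Let m be an odd squarefree positive integer and ζ = exp(2πi/(4m)). Then the set {ζ^k : 1 ≤ k ≤ 2m, gcd(k, 2m) = 1} is linearly independent over ℚ. -/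
/-!
For squarefree `n` the primitive `n`-th roots of unity span, over `ℚ`, every power of a primitive
`n`-th root `ω`: for a prime `p` one has `1 = -∑` of the primitive `p`-th roots, a product of
primitive roots of coprime orders is primitive, and a root `ξ` of order `d` is `ξ · 1` with `1`
in the span of the primitive `n / d`-th roots. As there are `φ(n) = [ℚ(ω) : ℚ]` of them, they
are linearly independent.

If `ζ` is a primitive `4m`-th root with `m` odd and `k` is odd, then
`ζ ^ k = ± ζ ^ (3m) · (-ζ²) ^ ((k + m) / 2)`, where `-ζ²` is a primitive `m`-th root of unity.
So the `ζ ^ k` are, up to sign and a common factor, distinct primitive `m`-th roots of unity.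
-/

open Submodule

theorem IsPrimitiveRoot.mul_of_coprime_s5 {M : Type*} [CommMonoid M] {x y : M} {a b : ℕ}
    (hx : IsPrimitiveRoot x a) (hy : IsPrimitiveRoot y b) (hab : a.Coprime b) :
    IsPrimitiveRoot (x * y) (a * b) := by
  rw [IsPrimitiveRoot.iff_orderOf, (Commute.all x y).orderOf_mul_eq_mul_orderOf_of_coprime,
    hx.eq_orderOf, hy.eq_orderOf]
  rwa [← hx.eq_orderOf, ← hy.eq_orderOf]

theorem IsPrimitiveRoot.neg_of_two_mul_of_odd {R : Type*} [CommRing R] [IsDomain R] {η : R}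
    {m : ℕ} (hη : IsPrimitiveRoot η (2 * m)) (hm : Odd m) : IsPrimitiveRoot (-η) m := by
  have hηm : η ^ m = -1 :=
    (hη.pow (by linarith [hm.pos]) (mul_comm 2 m)).eq_neg_one_of_two_right
  refine ⟨by rw [hm.neg_pow, hηm, neg_neg], fun l hl => ?_⟩
  have : η ^ (2 * l) = 1 := by rw [pow_mul, ← neg_sq, ← pow_mul, mul_comm, pow_mul, hl, one_pow]
  exact Nat.dvd_of_mul_dvd_mul_left two_pos (hη.dvd_of_pow_eq_one _ this)

section Span

variable {R A : Type*} [CommRing R] [CommRing A] [Algebra R A]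

theorem span_isPrimitiveRoot_mul_le {a b : ℕ} (hab : a.Coprime b) :
    span R {x : A | IsPrimitiveRoot x a} * span R {x : A | IsPrimitiveRoot x b} ≤
      span R {x : A | IsPrimitiveRoot x (a * b)} := by
  rw [span_mul_span]
  refine span_mono ?_
  rintro _ ⟨x, hx, y, hy, rfl⟩
  exact hx.mul_of_coprime_s5 hy hab

variable [IsDomain A]

theorem one_mem_span_isPrimitiveRoot_of_prime {p : ℕ} (hp : p.Prime) {ω : A}
    (hω : IsPrimitiveRoot ω p) : (1 : A) ∈ span R {x : A | IsPrimitiveRoot x p} := by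
  have hsum := hω.geom_sum_eq_zero hp.one_lt
  rw [Finset.range_eq_Ico, Finset.sum_eq_sum_Ico_succ_bot hp.pos, pow_zero] at hsum
  rw [eq_neg_of_add_eq_zero_left hsum]
  refine neg_mem (sum_mem fun i hi => subset_span ?_)
  rw [Finset.mem_Ico] at hi
  exact hω.pow_of_coprime i (Nat.coprime_of_lt_prime (by omega) hi.2 hp).symm

theorem one_mem_span_isPrimitiveRoot_of_dvd {n : ℕ} {ω : A} (hω : IsPrimitiveRoot ω n)
    (hn : Squarefree n) {d : ℕ} (hd : d ∣ n) :
    (1 : A) ∈ span R {x : A | IsPrimitiveRoot x d} := by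
  induction d using Nat.recOnPosPrimePosCoprime with
  | zero => exact absurd (zero_dvd_iff.mp hd ▸ hn) not_squarefree_zero
  | one => exact subset_span IsPrimitiveRoot.one
  | prime_pow p k hp hk =>
    obtain rfl : k = 1 :=
      ((Nat.squarefree_pow_iff hp.ne_one hk.ne').mp (hn.squarefree_of_dvd hd)).2
    rw [pow_one] at hd ⊢
    exact one_mem_span_isPrimitiveRoot_of_prime hp
      (hω.pow (Nat.pos_of_ne_zero hn.ne_zero) (Nat.div_mul_cancel hd).symm)
  | coprime a b _ _ hab iha ihb =>
    rw [← mul_one (1 : A)]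
    exact span_isPrimitiveRoot_mul_le hab <|
      mul_mem_mul (iha (dvd_of_mul_right_dvd hd)) (ihb (dvd_of_mul_left_dvd hd))

theorem pow_mem_span_isPrimitiveRoot {n : ℕ} {ω : A} (hω : IsPrimitiveRoot ω n)
    (hn : Squarefree n) (i : ℕ) : ω ^ i ∈ span R {x : A | IsPrimitiveRoot x n} := by
  set d := orderOf (ω ^ i)
  obtain ⟨e, he⟩ : d ∣ n := orderOf_dvd_of_pow_eq_one <| by
    rw [← pow_mul, mul_comm, pow_mul, hω.pow_eq_one, one_pow]
  have hde : d.Coprime e := Nat.coprime_of_squarefree_mul (he ▸ hn)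
  rw [he, ← mul_one (ω ^ i)]
  exact span_isPrimitiveRoot_mul_le hde <| mul_mem_mul
    (subset_span (IsPrimitiveRoot.orderOf (ω ^ i)))
    (one_mem_span_isPrimitiveRoot_of_dvd hω hn (Dvd.intro_left d he.symm))

end Span

theorem linearIndepOn_isPrimitiveRoot {K : Type*} [Field K] [CharZero K] {n : ℕ} {ω : K}
    (hω : IsPrimitiveRoot ω n) (hn : Squarefree n) :
    LinearIndepOn ℚ id {x : K | IsPrimitiveRoot x n} := by
  have hpos : 0 < n := Nat.pos_of_ne_zero hn.ne_zero
  have hset : {x : K | IsPrimitiveRoot x n} = primitiveRoots n K := by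
    ext; simp [mem_primitiveRoots hpos]
  have hdeg : (minpoly ℚ ω).natDegree = n.totient := by
    rw [← Polynomial.cyclotomic_eq_minpoly_rat hω hpos, Polynomial.natDegree_cyclotomic]
  rw [hset, LinearIndepOn, linearIndependent_iff_card_le_finrank_span]
  simp only [Finset.coe_sort_coe, Fintype.card_coe, id_eq, Subtype.range_coe_subtype,
    Finset.setOfPred_mem]
  rw [hω.card_primitiveRoots, ← hdeg, Set.finrank]
  calc (minpoly ℚ ω).natDegree
      = Module.finrank ℚ
          (span ℚ (Set.range fun i : Fin (minpoly ℚ ω).natDegree => ω ^ (i : ℕ))) := by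
        rw [finrank_span_eq_card (linearIndependent_pow ω), Fintype.card_fin]
    _ ≤ _ := by
        refine finrank_mono (span_le.mpr ?_)
        rintro _ ⟨i, rfl⟩
        exact hset ▸ pow_mem_span_isPrimitiveRoot hω hn i

theorem exists_add_eq_two_mul_coprime {k m : ℕ} (hk : k.Coprime (2 * m)) (hm : Odd m) :
    ∃ j, k + m = 2 * j ∧ j.Coprime m := by
  obtain ⟨a, ha⟩ : Odd k := Nat.coprime_two_right.mp (hk.coprime_dvd_right (dvd_mul_right 2 m))
  obtain ⟨b, hb⟩ := hm
  refine ⟨a + b + 1, by omega, Nat.Coprime.coprime_mul_left (k := 2) ?_⟩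
  rw [show 2 * (a + b + 1) = k + m by omega, Nat.coprime_add_self_left]
  exact hk.coprime_dvd_right (dvd_mul_left m 2)

theorem pow_eq_neg_one_pow_mul_of_add_eq {R : Type*} [CommRing R] {ζ : R} {m : ℕ}
    (hζ : ζ ^ (4 * m) = 1) {k j : ℕ} (hkj : k + m = 2 * j) :
    ζ ^ k = (-1) ^ j * (ζ ^ (3 * m) * (-ζ ^ 2) ^ j) := by
  calc ζ ^ k = ζ ^ k * ζ ^ (4 * m) := by rw [hζ, mul_one]
    _ = ζ ^ (3 * m) * ζ ^ (2 * j) := by rw [← pow_add, ← pow_add, ← hkj]; ring_nf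
    _ = ζ ^ (3 * m) * ((-1) * -ζ ^ 2) ^ j := by rw [neg_one_mul, neg_neg, ← pow_mul]
    _ = (-1) ^ j * (ζ ^ (3 * m) * (-ζ ^ 2) ^ j) := by rw [mul_pow]; ring

theorem linearIndepOn_pow_of_isPrimitiveRoot_four_mul {K : Type*} [Field K] [CharZero K]
    {m : ℕ} {ζ : K} (hζ : IsPrimitiveRoot ζ (4 * m)) (hodd : Odd m) (hsf : Squarefree m) :
    LinearIndepOn ℚ (ζ ^ ·) {k : ℕ | k < 2 * m ∧ k.Coprime (2 * m)} := by
  set s := {k : ℕ | k < 2 * m ∧ k.Coprime (2 * m)}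
  have h4m : 0 < 4 * m := by have := hodd.pos; omega
  have hζ2 : IsPrimitiveRoot (ζ ^ 2) (2 * m) := hζ.pow h4m (by ring)
  have hω := hζ2.neg_of_two_mul_of_odd hodd
  choose j hj hjcop using fun k : s => exists_add_eq_two_mul_coprime k.2.2 hodd
  have hpow k := pow_eq_neg_one_pow_mul_of_add_eq hζ.pow_eq_one (hj k)
  have hinj : Function.Injective fun k : s => (-ζ ^ 2) ^ j k := by
    intro k₁ k₂ h
    dsimp only at h
    -- squaring removes the sign, and `ζ ^ 2` has order `2 * m > k`
    have hsq : ∀ k : s, (ζ ^ 2) ^ (k : ℕ) = (ζ ^ (3 * m)) ^ 2 * ((-ζ ^ 2) ^ j k) ^ 2 := by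
      intro k
      rw [← pow_mul, mul_comm, pow_mul, hpow k, mul_pow, ← pow_mul, mul_comm (j k), pow_mul,
        neg_one_sq, one_pow, one_mul, mul_pow]
    exact Subtype.ext (hζ2.pow_inj k₁.2.1 k₂.2.1 (by rw [hsq, hsq, h]))
  have hg : LinearIndependent ℚ fun k : s => (-ζ ^ 2) ^ j k :=
    (linearIndepOn_id_range_iff hinj).mp <| (linearIndepOn_isPrimitiveRoot hω hsf).mono <| by
      rintro _ ⟨k, rfl⟩
      exact hω.pow_of_coprime _ (hjcop k)
  have hc : ζ ^ (3 * m) ≠ 0 := pow_ne_zero _ (hζ.ne_zero h4m.ne')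
  have hfun : (fun k : s => ζ ^ (k : ℕ)) = (fun k => (-1 : ℚˣ) ^ j k) •
      (LinearMap.mulLeft ℚ (ζ ^ (3 * m)) ∘ fun k => (-ζ ^ 2) ^ j k) := by
    funext k
    simp [hpow k, Units.smul_def, Algebra.smul_def]
  show LinearIndependent ℚ fun k : s => ζ ^ (k : ℕ)
  rw [hfun]
  exact (hg.map' _ (LinearMap.ker_eq_bot.mpr (mul_right_injective₀ hc))).units_smul _

theorem linearIndependent_pow_root_four_mul_squarefree_general (m : ℕ)
    (hodd : Odd m) (hsf : Squarefree m) :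
    LinearIndependent ℚ
      (fun k : {k : ℕ // 1 ≤ k ∧ k ≤ 2 * m ∧ Nat.gcd k (2 * m) = 1} =>
        Complex.exp (2 * Real.pi * Complex.I / (4 * m)) ^ (k : ℕ)) := by
  have hm : 0 < m := hodd.pos
  have hζ : IsPrimitiveRoot (Complex.exp (2 * Real.pi * Complex.I / (4 * m))) (4 * m) := by
    convert Complex.isPrimitiveRoot_exp (4 * m) (by positivity) using 3
    push_cast
    ring
  refine (linearIndepOn_pow_of_isPrimitiveRoot_four_mul hζ hodd hsf).mono ?_
  rintro k ⟨-, hle, hgcd⟩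
  refine ⟨hle.lt_of_ne ?_, hgcd⟩
  rintro rfl
  rw [Nat.gcd_self] at hgcd
  omega

/-- For an odd squarefree positive integer `m` and `ζ = exp(2πi/(4m))`, the set
`{ζ^k : 1 ≤ k ≤ 2m, gcd(k, 2m) = 1}` is linearly independent over `ℚ`. -/
theorem linearIndependent_pow_root_four_mul_squarefree (m : ℕ) (hm : 0 < m)
    (hodd : Odd m) (hsf : Squarefree m) :
    LinearIndependent ℚ
      (fun k : {k : ℕ // 1 ≤ k ∧ k ≤ 2 * m ∧ Nat.gcd k (2 * m) = 1} =>
        Complex.exp (2 * Real.pi * Complex.I / (4 * m)) ^ (k : ℕ)) :=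
  linearIndependent_pow_root_four_mul_squarefree_general m hodd hsf
end

section
/- Let F, F̃ ∈ ℤ[x] with F(x) = F̃(x²), and let p ∈ ℤ[x] be an irreducible factor of F such that p(x) = p(-x), so that p(x) = p̃(x²) for some p̃ ∈ ℤ[x]. Then the multiplicity of p(x) as a factor of F(x) equals the multiplicity of p̃(x) as a factor of F̃(x). -/
/-!
Substituting `x²` is the ring map `expand 2`, and `contract 2` (keep the even-degree coefficients)
is a left inverse of it that is linear over its image. Applying `contract 2` to
`expand q * c = expand G` gives `q * contract 2 c = G`, so divisibility by `expand q` descends;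
take `q = pt ^ m`.
-/

open Polynomial

theorem Polynomial.expand_dvd_expand_iff {R : Type*} [CommRing R] {n : ℕ} (hn : n ≠ 0)
    {f g : R[X]} : expand R n f ∣ expand R n g ↔ f ∣ g := by
  refine ⟨fun ⟨c, hc⟩ ↦ ⟨contract n c, ?_⟩, _root_.map_dvd _⟩
  calc g = contract n (expand R n g) := (contract_expand (p := n) hn).symm
    _ = f * contract n c := by rw [hc, mul_comm, contract_mul_expand hn, mul_comm]

theorem even_poly_factor_multiplicity_general (F Ft p pt : Polynomial ℤ)
    (hF : F = Ft.comp (X ^ 2)) (hp : p = pt.comp (X ^ 2)) :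
    ∀ m : ℕ, p ^ m ∣ F ↔ pt ^ m ∣ Ft := by
  intro m
  rw [hF, hp, ← expand_eq_comp_X_pow, ← expand_eq_comp_X_pow, ← map_pow,
    expand_dvd_expand_iff two_ne_zero]

/-- If `F(x) = F̃(x²)` and `p` is an irreducible factor of `F` with `p(x) = p̃(x²)`, then the
multiplicity of `p` in `F` equals the multiplicity of `p̃` in `F̃`. -/
theorem even_poly_factor_multiplicity (F Ft p pt : Polynomial ℤ)
    (hF : F = Ft.comp (X ^ 2)) (hFne : F ≠ 0) (hirr : Irreducible p)
    (hdvd : p ∣ F) (hsym : p.comp (-X) = p) (hp : p = pt.comp (X ^ 2)) :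
    ∀ m : ℕ, p ^ m ∣ F ↔ pt ^ m ∣ Ft :=
  even_poly_factor_multiplicity_general F Ft p pt hF hp
end

section
/- Let χ be a primitive quadratic Dirichlet character of odd conductor D with χ(-1) = -1 (χ odd). Then F_χ(-1) = 2χ(2) Σ_{a=1}^{(D-1)/2} χ(a), where F_χ(x) = Σ_{a=1}^{D-1} χ(a) x^a. -/
open scoped BigOperators

/-- For an odd primitive quadratic Dirichlet character of odd conductor `D`,
`F_χ(-1) = 2 χ(2) Σ_{a=1}^{(D-1)/2} χ(a)`. -/
theorem fekete_at_neg_one_odd_char (D : ℕ) (hD : Odd D)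
    (χ : DirichletCharacter ℂ D) (hprim : χ.IsPrimitive) (hquad : χ.IsQuadratic)
    (hodd : χ (-1) = -1) :
    ∑ a ∈ Finset.Ico 1 D, χ (a : ZMod D) * (-1 : ℂ) ^ a =
      2 * χ (2 : ZMod D) * ∑ a ∈ Finset.Icc 1 ((D - 1) / 2), χ (a : ZMod D) := by
  have hDodd : D % 2 = 1 := Nat.odd_iff.mp hD
  set m := (D - 1) / 2 with hm
  -- split the sum into even and odd indices
  rw [← Finset.sum_filter_add_sum_filter_not (Finset.Ico 1 D) (fun a => Even a)]
  have heven : ∑ a ∈ (Finset.Ico 1 D).filter (fun a => Even a), χ (a : ZMod D) * (-1 : ℂ) ^ a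
      = ∑ b ∈ Finset.Icc 1 m, χ (2 : ZMod D) * χ (b : ZMod D) := by
    refine Finset.sum_nbij' (fun a => a / 2) (fun b => 2 * b) ?_ ?_ ?_ ?_ ?_
    · intro a ha
      simp only [Finset.mem_filter, Finset.mem_Ico, Nat.even_iff] at ha
      simp only [Finset.mem_Icc]
      omega
    · intro b hb
      simp only [Finset.mem_Icc] at hb
      simp only [Finset.mem_filter, Finset.mem_Ico, Nat.even_iff]
      omega
    · intro a ha
      simp only [Finset.mem_filter, Finset.mem_Ico, Nat.even_iff] at ha
      omega
    · intro b hb; omega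
    · intro a ha
      simp only [Finset.mem_filter, Finset.mem_Ico, Nat.even_iff] at ha
      have h2 : a = 2 * (a / 2) := by omega
      have hc := congrArg (Nat.cast : ℕ → ZMod D) h2
      push_cast at hc
      rw [hc, map_mul, Even.neg_one_pow (by rw [Nat.even_iff]; omega), mul_one]
  have hoddp : ∑ a ∈ (Finset.Ico 1 D).filter (fun a => ¬ Even a),
        χ (a : ZMod D) * (-1 : ℂ) ^ a
      = ∑ b ∈ Finset.Icc 1 m, χ (2 : ZMod D) * χ (b : ZMod D) := by
    refine Finset.sum_nbij' (fun a => (D - a) / 2) (fun b => D - 2 * b) ?_ ?_ ?_ ?_ ?_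
    · intro a ha
      simp only [Finset.mem_filter, Finset.mem_Ico, Nat.even_iff] at ha
      simp only [Finset.mem_Icc]
      omega
    · intro b hb
      simp only [Finset.mem_Icc] at hb
      simp only [Finset.mem_filter, Finset.mem_Ico, Nat.even_iff]
      omega
    · intro a ha
      simp only [Finset.mem_filter, Finset.mem_Ico, Nat.even_iff] at ha
      omega
    · intro b hb
      simp only [Finset.mem_Icc] at hb
      omega
    · intro a ha
      simp only [Finset.mem_filter, Finset.mem_Ico, Nat.even_iff] at ha
      have hle : 2 * ((D - a) / 2) ≤ D := by omega
      have h2 : a = D - 2 * ((D - a) / 2) := by omega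
      have hcast : ((a : ZMod D)) = (-1) * ((2 : ZMod D) * (((D - a) / 2 : ℕ) : ZMod D)) := by
        have hc := congrArg (Nat.cast : ℕ → ZMod D) h2
        rw [Nat.cast_sub hle, ZMod.natCast_self] at hc
        push_cast at hc
        rw [hc]; ring
      rw [hcast, map_mul, map_mul, hodd]
      have hpow : (-1 : ℂ) ^ a = -1 := Odd.neg_one_pow (by rw [Nat.odd_iff]; omega)
      rw [hpow]
      ring
  rw [heven, hoddp, ← Finset.mul_sum]
  ring
end

section
/- Let p be an odd prime, χ the quadratic character mod p (Legendre symbol), F(x) = Σ_{a=1}^{p-1} χ(a) x^a, and m a positive integer such that gcd(m, p-1) < φ(m). Then F(ζ_m) ≠ 0 for ζ_m = exp(2πi/m). -/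
open scoped BigOperators

open Polynomial Finset

/-- Let `p` be an odd prime, `F(x) = Σ_{a=1}^{p-1} (a/p) x^a` the Fekete polynomial of the
Legendre symbol, and `m` a positive integer with `gcd(m, p-1) < φ(m)`. Then `F(ζₘ) ≠ 0`. -/
theorem fekete_legendre_nonzero_of_gcd_lt_totient (p : ℕ) [Fact p.Prime] (hp : p ≠ 2)
    (m : ℕ) (hm : 0 < m) (h : Nat.gcd m (p - 1) < Nat.totient m) :
    (∑ a ∈ Finset.Ico 1 p,
        ((legendreSym p (a : ℤ) : ℤ) : ℂ) * Complex.exp (2 * Real.pi * Complex.I / m) ^ a)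
      ≠ 0 := by
  intro hF
  have hp0 : 0 < p := (Fact.out : p.Prime).pos
  set ζ : ℂ := Complex.exp (2 * Real.pi * Complex.I / m) with hζdef
  have hζ : IsPrimitiveRoot ζ m := Complex.isPrimitiveRoot_exp m hm.ne'
  have hζm : ζ ^ m = 1 := hζ.pow_eq_one
  have hζ0 : ζ ≠ 0 := Complex.exp_ne_zero _
  set c : ℕ → ℤ := fun a => (1 - legendreSym p (a : ℤ)) / 2 with hc
  have hleg : ∀ a ∈ Finset.Ico 1 p, (legendreSym p (a : ℤ) : ℤ) = 1 - 2 * c a := by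
    intro a ha
    simp only [Finset.mem_Ico] at ha
    have hane : (((a : ℤ)) : ZMod p) ≠ 0 := by
      rw [Int.cast_natCast, Ne, ZMod.natCast_eq_zero_iff]
      intro hdvd
      have := Nat.le_of_dvd (by omega) hdvd
      omega
    rcases legendreSym.eq_one_or_neg_one p hane with h1 | h1 <;>
      simp [hc, h1]
  set E : ℤ[X] := ∑ a ∈ Finset.Ico 1 p, C (c a) * X ^ a with hE
  have hAeval : (aeval ζ) E = ∑ a ∈ Finset.Ico 1 p, (c a : ℂ) * ζ ^ a := by
    simp [hE]
  -- Step 1: Σ ζ^a = 2 * aeval ζ E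
  have h1 : ∑ a ∈ Finset.Ico 1 p, ζ ^ a = 2 * (aeval ζ) E := by
    have h0 : ∑ a ∈ Finset.Ico 1 p, ((1 : ℂ) - 2 * (c a : ℂ)) * ζ ^ a = 0 := by
      rw [← hF]
      refine Finset.sum_congr rfl fun a ha => ?_
      have : ((legendreSym p (a : ℤ) : ℤ) : ℂ) = ((1 - 2 * c a : ℤ) : ℂ) := by
        exact_mod_cast congrArg (Int.cast : ℤ → ℂ) (hleg a ha)
      rw [this]; push_cast; ring
    have hexp : ∑ a ∈ Finset.Ico 1 p, ((1 : ℂ) - 2 * (c a : ℂ)) * ζ ^ a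
        = ∑ a ∈ Finset.Ico 1 p, ζ ^ a - 2 * ∑ a ∈ Finset.Ico 1 p, (c a : ℂ) * ζ ^ a := by
      rw [Finset.mul_sum, ← Finset.sum_sub_distrib]
      refine Finset.sum_congr rfl fun a _ => by ring
    rw [hexp] at h0
    rw [hAeval]
    linear_combination h0
  -- Step 2: ζ^(p-1) - 1 = 2 * aeval ζ (X^(m-1) * (X-1) * E)
  have hgeom : (ζ - 1) * ∑ a ∈ Finset.Ico 1 p, ζ ^ a = ζ ^ p - ζ := by
    have hg := geom_sum_mul ζ p
    have hsplit : ∑ i ∈ Finset.range p, ζ ^ i = 1 + ∑ a ∈ Finset.Ico 1 p, ζ ^ a := by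
      rw [Finset.range_eq_Ico, Finset.sum_eq_sum_Ico_succ_bot hp0]
      simp
    rw [hsplit] at hg
    linear_combination hg
  have hmm : m - 1 + 1 = m := Nat.succ_pred_eq_of_pos hm
  have hpp : p - 1 + 1 = p := Nat.succ_pred_eq_of_pos hp0
  have hzm1 : ζ ^ (m - 1) * ζ = 1 := by
    rw [← pow_succ, hmm, hζm]
  have h2 : ζ ^ (p - 1) - 1 = 2 * (aeval ζ) (X ^ (m - 1) * (X - 1) * E) := by
    have heval : (aeval ζ) (X ^ (m - 1) * (X - 1) * E)
        = ζ ^ (m - 1) * (ζ - 1) * (aeval ζ) E := by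
      simp
    rw [heval]
    have : 2 * (ζ ^ (m - 1) * (ζ - 1) * (aeval ζ) E)
        = ζ ^ (m - 1) * ((ζ - 1) * (2 * (aeval ζ) E)) := by ring
    rw [this, ← h1, hgeom]
    have hzp : ζ ^ p = ζ ^ (p - 1) * ζ := by rw [← pow_succ, hpp]
    rw [hzp]
    calc ζ ^ (p - 1) - 1 = ζ ^ (p - 1) * (ζ ^ (m - 1) * ζ) - (ζ ^ (m - 1) * ζ) := by
          rw [hzm1]; ring
      _ = ζ ^ (m - 1) * (ζ ^ (p - 1) * ζ - ζ) := by ring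
  -- Step 3: find k with ζ^d = (ζ^(p-1))^k
  set d : ℕ := Nat.gcd m (p - 1) with hd
  have hd1 : 0 < d := Nat.gcd_pos_of_pos_left _ hm
  set w : ℂ := ζ ^ (p - 1) with hw
  have hwm : w ^ m = 1 := by
    rw [hw, ← pow_mul, mul_comm, pow_mul, hζm, one_pow]
  have hw0 : w ≠ 0 := pow_ne_zero _ hζ0
  clear_value w
  obtain ⟨k, hk⟩ : ∃ k : ℕ, ζ ^ d = w ^ k := by
    have hbez : (d : ℤ) = (m : ℤ) * Nat.gcdA m (p - 1) + ((p - 1 : ℕ) : ℤ) * Nat.gcdB m (p - 1) :=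
      Nat.gcd_eq_gcd_ab m (p - 1)
    set b : ℤ := Nat.gcdB m (p - 1) with hb
    have hmz : (m : ℤ) ≠ 0 := by exact_mod_cast hm.ne'
    refine ⟨(b % m).toNat, ?_⟩
    have hζd : ζ ^ (d : ℤ) = w ^ b := by
      rw [hbez, zpow_add₀ hζ0, zpow_mul, zpow_mul]
      rw [show ζ ^ (m : ℤ) = 1 by rw [zpow_natCast, hζm]]
      rw [show ζ ^ ((p - 1 : ℕ) : ℤ) = w by rw [zpow_natCast, hw]]
      simp
    have hwb : w ^ b = w ^ ((b % m).toNat) := by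
      have hdm : b = (m : ℤ) * (b / m) + b % m := (Int.mul_ediv_add_emod b m).symm
      rw [show w ^ b = w ^ ((m : ℤ) * (b / m) + b % m) by rw [← hdm]]
      rw [zpow_add₀ hw0, zpow_mul]
      rw [show w ^ (m : ℤ) = 1 by rw [zpow_natCast, hwm]]
      rw [one_zpow, one_mul]
      rw [← zpow_natCast w ((b % m).toNat), Int.toNat_of_nonneg (Int.emod_nonneg b hmz)]
    rw [← hζd.trans hwb, zpow_natCast]
  -- define the witness polynomial
  set Q : ℤ[X] := X ^ (m - 1) * (X - 1) * E * ∑ i ∈ Finset.range k, X ^ ((p - 1) * i)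
    with hQ
  set P : ℤ[X] := X ^ d - 1 - C 2 * Q with hP
  have hPzero : (aeval ζ) P = 0 := by
    have hQeval : (aeval ζ) Q
        = (aeval ζ) (X ^ (m - 1) * (X - 1) * E) * ∑ i ∈ Finset.range k, w ^ i := by
      rw [hQ, map_mul]
      congr 1
      rw [map_sum]
      refine Finset.sum_congr rfl fun i _ => ?_
      rw [aeval_X_pow, pow_mul, ← hw]
    have hgk := geom_sum_mul w k
    rw [hP]
    simp only [map_sub, map_mul, map_one, map_pow, aeval_X, aeval_C]
    rw [hQeval, hk]
    rw [show (algebraMap ℤ ℂ) 2 = 2 by norm_num]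
    linear_combination (∑ i ∈ Finset.range k, w ^ i) * h2 - hgk
  -- Step 4: cyclotomic divides P
  have hdvd : cyclotomic m ℤ ∣ P := by
    rw [cyclotomic_eq_minpoly hζ hm]
    exact minpoly.isIntegrallyClosed_dvd (hζ.isIntegral hm) hPzero
  have hdvd2 : cyclotomic m (ZMod 2) ∣ P.map (Int.castRingHom (ZMod 2)) := by
    rw [← map_cyclotomic m (Int.castRingHom (ZMod 2))]
    exact Polynomial.map_dvd _ hdvd
  have hPmap : P.map (Int.castRingHom (ZMod 2)) = X ^ d - 1 := by
    rw [hP]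
    simp only [Polynomial.map_sub, Polynomial.map_mul, Polynomial.map_pow,
      Polynomial.map_one, Polynomial.map_X, Polynomial.map_C]
    rw [show ((Int.castRingHom (ZMod 2)) 2) = 0 by decide, Polynomial.C_0, zero_mul, sub_zero]
  rw [hPmap] at hdvd2
  have hXd : (X ^ d - 1 : (ZMod 2)[X]) ≠ 0 := by
    intro h0
    have : ((X ^ d - 1 : (ZMod 2)[X])).natDegree = d := by
      simpa using (natDegree_X_pow_sub_C (n := d) (r := (1 : ZMod 2)))
    rw [h0] at this
    simp at this
    omega
  have hle : (cyclotomic m (ZMod 2)).natDegree ≤ (X ^ d - 1 : (ZMod 2)[X]).natDegree :=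
    natDegree_le_of_dvd hdvd2 hXd
  rw [natDegree_cyclotomic] at hle
  have : ((X ^ d - 1 : (ZMod 2)[X])).natDegree = d := by
    simpa using (natDegree_X_pow_sub_C (n := d) (r := (1 : ZMod 2)))
  rw [this] at hle
  omega
end

section
/- Let p be an odd prime, χ the Legendre symbol mod p, F(x) = Σ_{a=1}^{p-1} χ(a) x^a, and m a positive integer such that m/gcd(m, p-1) is an odd integer greater than 1. Then F(ζ_m) ≠ 0 for ζ_m = exp(2πi/m). -/
open scoped BigOperators

/-- Let `p` be an odd prime, `F(x) = Σ_{a=1}^{p-1} (a/p) x^a`, and `m` a positive integer such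
that `m / gcd(m, p-1)` is an odd integer greater than `1`. Then `F(ζₘ) ≠ 0`. -/
theorem fekete_legendre_nonzero_of_odd_ratio (p : ℕ) [Fact p.Prime] (hp : p ≠ 2)
    (m : ℕ) (hm : 0 < m)
    (hodd : Odd (m / Nat.gcd m (p - 1))) (h1 : 1 < m / Nat.gcd m (p - 1)) :
    (∑ a ∈ Finset.Ico 1 p,
        ((legendreSym p (a : ℤ) : ℤ) : ℂ) * Complex.exp (2 * Real.pi * Complex.I / m) ^ a)
      ≠ 0 := by
  intro hF
  set ζ : ℂ := Complex.exp (2 * Real.pi * Complex.I / m) with hζdef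
  have hζ : IsPrimitiveRoot ζ m := Complex.isPrimitiveRoot_exp m hm.ne'
  set d := Nat.gcd m (p - 1) with hd
  set r := m / d with hr
  have hpp : p.Prime := Fact.out
  have hp3 : 3 ≤ p := by
    have := hpp.two_le
    omega
  have hdpos : 0 < d := Nat.gcd_pos_of_pos_left _ hm
  have hddvd : d ∣ p - 1 := Nat.gcd_dvd_right m (p - 1)
  have hmd : m = d * r := (Nat.mul_div_cancel' (Nat.gcd_dvd_left m (p - 1))).symm
  set A := integralClosure ℤ ℂ with hA
  have hζA : ζ ∈ A := hζ.isIntegral hm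
  set H : ℂ := ∑ a ∈ Finset.Ico 1 p, (((1 - legendreSym p (a : ℤ)) / 2 : ℤ) : ℂ) * ζ ^ a with hH
  have hHA : H ∈ A := by
    refine Subalgebra.sum_mem A fun a _ => ?_
    exact mul_mem (intCast_mem A _) (pow_mem hζA a)
  have hsum : ∑ a ∈ Finset.Ico 1 p, ζ ^ a = 2 * H := by
    have key : ∀ a ∈ Finset.Ico 1 p,
        (ζ : ℂ) ^ a = ((legendreSym p (a : ℤ) : ℤ) : ℂ) * ζ ^ a
          + 2 * ((((1 - legendreSym p (a : ℤ)) / 2 : ℤ) : ℂ) * ζ ^ a) := by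
      intro a ha
      rw [Finset.mem_Ico] at ha
      have hane : ((a : ℤ) : ZMod p) ≠ 0 := by
        rw [Int.cast_natCast, Ne, ZMod.natCast_eq_zero_iff]
        intro hdvd
        exact absurd (Nat.le_of_dvd (by omega) hdvd) (by omega)
      rcases legendreSym.eq_one_or_neg_one p hane with h | h <;>
        rw [h] <;> push_cast <;> ring
    calc ∑ a ∈ Finset.Ico 1 p, ζ ^ a
        = (∑ a ∈ Finset.Ico 1 p, ((legendreSym p (a : ℤ) : ℤ) : ℂ) * ζ ^ a)
          + 2 * H := by
          rw [hH, Finset.mul_sum, ← Finset.sum_add_distrib]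
          exact Finset.sum_congr rfl key
      _ = 2 * H := by rw [hF, zero_add]
  have hgeo : (∑ a ∈ Finset.Ico 1 p, ζ ^ a) * (ζ - 1) = ζ ^ p - ζ := by
    have h0 := geom_sum_mul ζ p
    rw [Finset.range_eq_Ico, Finset.sum_eq_sum_Ico_succ_bot (by omega : 0 < p)] at h0
    rw [pow_zero] at h0
    linear_combination h0
  set b : ℂ := H * (ζ - 1) * ζ ^ (m - 1) with hb
  have hbA : b ∈ A := mul_mem (mul_mem hHA (sub_mem hζA (one_mem A))) (pow_mem hζA _)
  have hζm : ζ ^ m = 1 := hζ.pow_eq_one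
  have hζinv : ζ * ζ ^ (m - 1) = 1 := by
    have h1' : ζ ^ (m - 1 + 1) = 1 := by
      rw [show m - 1 + 1 = m from by omega, hζm]
    rw [pow_succ'] at h1'
    exact h1'
  have hζp : ζ ^ p = ζ ^ (p - 1) * ζ := by
    conv_lhs => rw [show p = p - 1 + 1 from by omega]
    rw [pow_succ]
  have heta : ζ ^ (p - 1) - 1 = 2 * b := by
    have h2 : 2 * H * (ζ - 1) = ζ ^ (p - 1) * ζ - ζ := by
      rw [← hζp, ← hgeo, hsum]
    have h3 := congrArg (· * ζ ^ (m - 1)) h2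
    rw [hb]
    linear_combination -h3 - (ζ ^ (p - 1) - 1) * hζinv
  have hηne : ζ ^ (p - 1) ≠ 1 := by
    intro h
    have h4 : m ∣ p - 1 := (hζ.pow_eq_one_iff_dvd _).mp h
    have h5 : d = m := Nat.gcd_eq_left h4
    rw [hr, h5, Nat.div_self hm] at h1
    omega
  have hbne : b ≠ 0 := by
    intro h
    rw [h, mul_zero, sub_eq_zero] at heta
    exact hηne heta
  have hηr : (ζ ^ (p - 1)) ^ r = 1 := by
    rw [← pow_mul, hζ.pow_eq_one_iff_dvd]
    obtain ⟨k, hk⟩ := hddvd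
    exact ⟨k, by rw [hk, hmd]; ring⟩
  set η : ℂ := ζ ^ (p - 1) with hηdef
  set S : ℂ := ∑ k ∈ Finset.range r, η ^ k with hS
  have hS0 : S = 0 := by
    have h0 := geom_sum_mul η r
    rw [hηr, sub_self] at h0
    rcases mul_eq_zero.mp h0 with h | h
    · exact h
    · exfalso
      rw [sub_eq_zero] at h
      exact hηne h
  set T : ℂ := ∑ k ∈ Finset.range r, ∑ j ∈ Finset.range k, η ^ j with hT
  have hTA : T ∈ A := by
    refine Subalgebra.sum_mem A fun k _ => Subalgebra.sum_mem A fun j _ => ?_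
    exact pow_mem (pow_mem hζA _) _
  have hSrT : S - (r : ℂ) = 2 * b * T := by
    have h6 : S - (r : ℂ) = ∑ k ∈ Finset.range r, (η ^ k - 1) := by
      rw [hS, Finset.sum_sub_distrib, Finset.sum_const, Finset.card_range]
      ring
    rw [h6, hT, Finset.mul_sum]
    refine Finset.sum_congr rfl fun k _ => ?_
    have h7 := geom_sum_mul η k
    rw [heta] at h7
    linear_combination -h7
  have hrc : (r : ℂ) = -(2 * (b * T)) := by
    rw [hS0] at hSrT
    linear_combination -hSrT
  have hcA : b * T ∈ A := mul_mem hbA hTA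
  obtain ⟨t, ht⟩ := hodd
  have hhalf : b * T + (t : ℂ) ∈ A := add_mem hcA (natCast_mem A t)
  have hval : b * T + (t : ℂ) = -(1/2 : ℂ) := by
    have h8 : (r : ℂ) = 2 * t + 1 := by rw [ht]; push_cast; ring
    rw [h8] at hrc
    linear_combination hrc / 2
  have hint : IsIntegral ℤ (-(1/2 : ℂ)) := hval ▸ hhalf
  have hmap : (algebraMap ℚ ℂ) (-(1/2 : ℚ)) = -(1/2 : ℂ) := by
    push_cast
    norm_num
  rw [← hmap] at hint
  have hq : IsIntegral ℤ (-(1/2 : ℚ)) :=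
    IsIntegral.tower_bot (algebraMap ℚ ℂ).injective hint
  obtain ⟨y, hy⟩ := IsIntegrallyClosed.isIntegral_iff.mp hq
  have hy' : (y : ℚ) = -(1/2) := by exact_mod_cast hy
  have h2y : (2 * y : ℚ) = -1 := by rw [hy']; ring
  have h2y' : (2 * y : ℤ) = -1 := by exact_mod_cast h2y
  omega
end

section
/- Let H be a subgroup of the hyperoctahedral group (ℤ/2)^n ⋊ S_n (embedded in the symmetric group on {−n,…,−1,1,…,n} as signed permutations) such that (1) the projection H → S_n is surjective, and (2) H contains a transposition (as a permutation of the 2n points). Then H = (ℤ/2)^n ⋊ S_n. -/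
def hyperEmbed (n : ℕ) (a : Fin n → ℤˣ) (σ : Equiv.Perm (Fin n)) :
    Equiv.Perm (Fin n × ℤˣ) :=
  σ.prodShear fun k => Equiv.mulRight (a (σ k))

lemma hyperEmbed_apply (n : ℕ) (a : Fin n → ℤˣ) (σ : Equiv.Perm (Fin n)) (k : Fin n) (s : ℤˣ) :
    hyperEmbed n a σ (k, s) = (σ k, s * a (σ k)) := rfl

lemma hyperEmbed_mul (n : ℕ) (a b : Fin n → ℤˣ) (σ τ : Equiv.Perm (Fin n)) :
    hyperEmbed n a σ * hyperEmbed n b τ = hyperEmbed n (fun j => a j * b (σ⁻¹ j)) (σ * τ) := by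
  apply Equiv.ext; rintro ⟨k, s⟩
  simp [hyperEmbed_apply, Equiv.Perm.mul_apply, mul_assoc, mul_comm, mul_left_comm]

lemma hyperEmbed_one (n : ℕ) : hyperEmbed n 1 1 = 1 := by
  apply Equiv.ext; rintro ⟨k, s⟩; simp [hyperEmbed_apply]

lemma hyperEmbed_single (n : ℕ) (j : Fin n) :
    hyperEmbed n (Pi.mulSingle j (-1)) 1 = Equiv.swap (j, 1) (j, -1) := by
  apply Equiv.ext; rintro ⟨k, s⟩
  rcases eq_or_ne k j with rfl | h
  · rcases Int.units_eq_one_or s with rfl | rfl <;>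
      simp [hyperEmbed_apply, Equiv.swap_apply_def]
  · rcases Int.units_eq_one_or s with rfl | rfl <;>
      simp [hyperEmbed_apply, Equiv.swap_apply_def, h, Prod.ext_iff]

lemma swap_pm (n : ℕ) (j : Fin n) (c : ℤˣ) :
    Equiv.swap (j, c) (j, -c) = Equiv.swap (j, (1:ℤˣ)) (j, -1) := by
  rcases Int.units_eq_one_or c with rfl | rfl
  · rfl
  · rw [Equiv.swap_comm]; norm_num

/-- A subgroup `H` of the hyperoctahedral group that surjects onto `Sₙ` and contains a
transposition of the `2n` points is the whole hyperoctahedral group. -/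
theorem subgroup_eq_hyperoctahedral (n : ℕ) (H : Subgroup (Equiv.Perm (Fin n × ℤˣ)))
    (h1 : ∀ τ ∈ H, ∃ (a : Fin n → ℤˣ) (σ : Equiv.Perm (Fin n)), τ = hyperEmbed n a σ)
    (h2 : ∀ σ : Equiv.Perm (Fin n), ∃ a : Fin n → ℤˣ, hyperEmbed n a σ ∈ H)
    (h3 : ∃ τ ∈ H, ∃ x y : Fin n × ℤˣ, x ≠ y ∧ τ = Equiv.swap x y) :
    ∀ (a : Fin n → ℤˣ) (σ : Equiv.Perm (Fin n)), hyperEmbed n a σ ∈ H := by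
  -- Step A: H contains swap (k0,1) (k0,-1) for some k0
  have hA : ∃ k0 : Fin n, Equiv.swap (k0, (1:ℤˣ)) (k0, -1) ∈ H := by
    obtain ⟨τ, hτH, ⟨k, s⟩, ⟨k', s'⟩, hxy, rfl⟩ := h3
    obtain ⟨a0, σ0, hτ⟩ := h1 _ hτH
    have happ : hyperEmbed n a0 σ0 (k, s) = (k', s') := by
      rw [← hτ]; exact Equiv.swap_apply_left _ _
    rw [hyperEmbed_apply] at happ
    have hk' : σ0 k = k' := (Prod.mk.injEq _ _ _ _).mp happ |>.1
    have hkk : σ0 k = k := by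
      by_contra h
      have hz : Equiv.swap (k, s) (k', s') (k, -s) = (k, -s) := by
        apply Equiv.swap_apply_of_ne_of_ne
        · simp [Prod.ext_iff]
        · exact fun hcon => h (hk'.trans (Prod.ext_iff.mp hcon).1.symm)
      rw [hτ, hyperEmbed_apply] at hz
      exact h ((Prod.mk.injEq _ _ _ _).mp hz).1
    have hk'k : k' = k := by rw [← hk', hkk]
    have hs' : s' = -s := by
      have hss : s ≠ s' := fun h => hxy (by rw [h, hk'k])
      rcases Int.units_eq_one_or s with rfl | rfl <;>
        rcases Int.units_eq_one_or s' with rfl | rfl <;> simp_all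
    rw [hk'k, hs', swap_pm] at hτH
    exact ⟨k, hτH⟩
  obtain ⟨k0, hk0⟩ := hA
  -- Step B: all sign-flip transpositions are in H
  have hB : ∀ j : Fin n, Equiv.swap (j, (1:ℤˣ)) (j, -1) ∈ H := by
    intro j
    obtain ⟨b, hb⟩ := h2 (Equiv.swap k0 j)
    have hm := H.mul_mem (H.mul_mem hb hk0) (H.inv_mem hb)
    rw [← Equiv.swap_apply_apply] at hm
    rw [hyperEmbed_apply, hyperEmbed_apply] at hm
    simp only [Equiv.swap_apply_left] at hm
    rw [one_mul] at hm
    rwa [show (-1 : ℤˣ) * b j = -(b j) by rw [neg_one_mul], swap_pm] at hm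
  -- Step C: all of (ℤ/2)^n is in H
  have key : ∀ s : Finset (Fin n), ∀ c : Fin n → ℤˣ, (∀ j ∉ s, c j = 1) →
      hyperEmbed n c 1 ∈ H := by
    intro s
    induction s using Finset.induction with
    | empty =>
      intro c hc
      have : c = 1 := funext fun j => hc j (Finset.notMem_empty j)
      rw [this, hyperEmbed_one]; exact H.one_mem
    | @insert i s hi ih =>
      intro c hc
      have hsplit : hyperEmbed n c 1 =
          hyperEmbed n (Pi.mulSingle i (c i)) 1 * hyperEmbed n (Function.update c i 1) 1 := by
        rw [hyperEmbed_mul, one_mul]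
        congr 1
        funext j
        rw [inv_one]
        simp only [Equiv.Perm.one_apply, Pi.mulSingle_apply]
        rcases eq_or_ne j i with rfl | h
        · simp
        · simp [h, Function.update_of_ne h]
      rw [hsplit]
      apply H.mul_mem
      · rcases Int.units_eq_one_or (c i) with h | h <;> rw [h]
        · rw [Pi.mulSingle_one, hyperEmbed_one]; exact H.one_mem
        · rw [hyperEmbed_single]; exact hB i
      · apply ih
        intro j hj
        rcases eq_or_ne j i with rfl | h
        · simp
        · rw [Function.update_of_ne h]
          exact hc j (by simp [h, hj])
  -- Step D
  intro a σ
  obtain ⟨b, hb⟩ := h2 σ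
  have hm := H.mul_mem (key Finset.univ (a * b⁻¹) (by simp)) hb
  rwa [hyperEmbed_mul, show (fun j => (a * b⁻¹) j * b ((1:Equiv.Perm (Fin n))⁻¹ j)) = a by
    funext j; simp [mul_assoc], one_mul] at hm
end

section
/- Let K be a field of characteristic ≠ 2, and let f ∈ K[x] be a monic reciprocal polynomial of even degree 2n with trace polynomial g ∈ K[x] of degree n, i.e. f(x) = x^n g(x + 1/x). Then disc(f) = (−1)^n f(1) f(−1) · disc(g)² up to a nonzero square in K; in particular, if (−1)^n f(1) f(−1) is a square in K, then disc(f) is a square in K. -/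
/-!
Over an algebraic closure write `g = ∏ (X - sᵢ)`. Then `f = ∏ (X² - sᵢ X + 1)`, the `i`-th factor
having roots `aᵢ, aᵢ⁻¹` with `aᵢ + aᵢ⁻¹ = sᵢ`. The product of `(PQ)'` over the roots of `PQ` is
the product of `P'` over the roots of `P`, of `Q'` over those of `Q`, and of the two cross terms
`∏_{P(r)=0} Q(r)` and `∏_{Q(r)=0} P(r)`. A quadratic factor contributes
`(aᵢ - aᵢ⁻¹)(aᵢ⁻¹ - aᵢ) = 4 - sᵢ²`, and two of them the cross terms `(sᵢ - sⱼ)² (sⱼ - sᵢ)²`, the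
square of what the corresponding linear factors of `g` contribute. Hence
`disc f = (-1)ⁿ ∏ (4 - sᵢ²) · (disc g)²` on the nose, and `∏ (4 - sᵢ²) = f(1) f(-1)`. Finally
`disc g` lies in `K`: up to sign it is the resultant of `g` and `g'`.
-/

open Polynomial

/-- The discriminant of a monic polynomial `f` over a field `K`, computed in an algebraic
closure of `K` as `(-1)^(d(d-1)/2) ∏ᵢ f'(rᵢ)`, where `r₁,…,r_d` are the roots of `f`. -/
noncomputable def polyDisc {K : Type*} [Field K] (f : Polynomial K) : AlgebraicClosure K :=
  (-1 : AlgebraicClosure K) ^ (f.natDegree * (f.natDegree - 1) / 2) *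
    ((f.aroots (AlgebraicClosure K)).map fun r => aeval r (derivative f)).prod

section ProdRootsEval

variable {R : Type*} [CommRing R] [IsDomain R]

noncomputable def prodRootsEval (P Q : R[X]) : R := (P.roots.map Q.eval).prod

lemma prodRootsEval_mul_right (P Q₁ Q₂ : R[X]) :
    prodRootsEval P (Q₁ * Q₂) = prodRootsEval P Q₁ * prodRootsEval P Q₂ := by
  simp only [prodRootsEval, eval_mul, Multiset.prod_map_mul]

lemma prodRootsEval_mul_left {P₁ P₂ : R[X]} (h : P₁ * P₂ ≠ 0) (Q : R[X]) :
    prodRootsEval (P₁ * P₂) Q = prodRootsEval P₁ Q * prodRootsEval P₂ Q := by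
  simp only [prodRootsEval, roots_mul h, Multiset.map_add, Multiset.prod_add]

lemma prodRootsEval_add_mul (P Q T : R[X]) : prodRootsEval P (Q + P * T) = prodRootsEval P Q := by
  refine congrArg Multiset.prod (Multiset.map_congr rfl fun r hr => ?_)
  rw [eval_add, eval_mul, (isRoot_of_mem_roots hr).eq_zero, zero_mul, add_zero]

lemma prodRootsEval_multiset_prod_right {ι : Type*} (P : R[X]) (s : Multiset ι) (Q : ι → R[X]) :
    prodRootsEval P (s.map Q).prod = (s.map fun i => prodRootsEval P (Q i)).prod := by
  simp only [prodRootsEval, eval_multiset_prod, Multiset.map_map, Function.comp_def]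
  exact Multiset.prod_map_prod_map _ _

lemma prodRootsEval_multiset_prod_left {ι : Type*} (s : Multiset ι) (P : ι → R[X])
    (hP : ∀ i ∈ s, P i ≠ 0) (Q : R[X]) :
    prodRootsEval (s.map P).prod Q = (s.map fun i => prodRootsEval (P i) Q).prod := by
  rw [prodRootsEval, roots_multiset_prod _ (by simpa [eq_comm] using hP),
    Multiset.bind_map, Multiset.map_bind, Multiset.prod_bind]
  rfl

lemma prodRootsEval_derivative_mul {P Q : R[X]} (h : P * Q ≠ 0) :
    prodRootsEval (P * Q) (derivative (P * Q)) =
      prodRootsEval P (derivative P) * prodRootsEval Q (derivative Q) *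
        (prodRootsEval P Q * prodRootsEval Q P) := by
  have hP : prodRootsEval P (derivative (P * Q)) =
      prodRootsEval P (derivative P) * prodRootsEval P Q := by
    rw [derivative_mul, prodRootsEval_add_mul, prodRootsEval_mul_right]
  have hQ : prodRootsEval Q (derivative (P * Q)) =
      prodRootsEval Q (derivative Q) * prodRootsEval Q P := by
    rw [derivative_mul, add_comm, mul_comm (derivative P), prodRootsEval_add_mul,
      prodRootsEval_mul_right, mul_comm]
  rw [prodRootsEval_mul_left h, hP, hQ]
  ring

lemma prodRootsEval_X_sub_C (s : R) (Q : R[X]) : prodRootsEval (X - C s) Q = Q.eval s := by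
  simp [prodRootsEval]

lemma prodRootsEval_derivative_prod_X_sub_C_cons (s : R) (T : Multiset R) :
    prodRootsEval ((s ::ₘ T).map (X - C ·)).prod (derivative ((s ::ₘ T).map (X - C ·)).prod) =
      prodRootsEval (T.map (X - C ·)).prod (derivative (T.map (X - C ·)).prod) *
        ((T.map (s - ·)).prod * (T.map (· - s)).prod) := by
  rw [Multiset.map_cons, Multiset.prod_cons, prodRootsEval_derivative_mul
    (monic_X_sub_C s |>.mul (monic_multiset_prod_of_monic _ _ fun t _ => monic_X_sub_C t)).ne_zero,
    prodRootsEval_X_sub_C, prodRootsEval_X_sub_C, prodRootsEval_multiset_prod_left _ _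
      (fun t _ => X_sub_C_ne_zero t) (X - C s)]
  simp only [prodRootsEval_X_sub_C, derivative_X_sub_C, eval_one, one_mul, eval_multiset_prod,
    Multiset.map_map, Function.comp_def, eval_sub, eval_X, eval_C]

end ProdRootsEval

section ReciprocalQuadratic

variable {M : Type*} [Field M]

noncomputable def reciprocalQuadratic (s : M) : M[X] := X ^ 2 - C s * X + 1

lemma reciprocalQuadratic_monic (s : M) : (reciprocalQuadratic s).Monic := by
  rw [reciprocalQuadratic]
  monicity!

lemma natDegree_reciprocalQuadratic (s : M) : (reciprocalQuadratic s).natDegree = 2 := by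
  rw [reciprocalQuadratic]
  compute_degree!

lemma monic_prod_reciprocalQuadratic (S : Multiset M) : (S.map reciprocalQuadratic).prod.Monic :=
  monic_multiset_prod_of_monic _ _ fun s _ => reciprocalQuadratic_monic s

lemma natDegree_prod_reciprocalQuadratic (S : Multiset M) :
    (S.map reciprocalQuadratic).prod.natDegree = 2 * Multiset.card S := by
  rw [natDegree_multiset_prod_of_monic _ (by simpa using fun s _ => reciprocalQuadratic_monic s)]
  simp [natDegree_reciprocalQuadratic, mul_comm]

lemma reciprocalQuadratic_add_inv {a : M} (ha : a ≠ 0) :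
    reciprocalQuadratic (a + a⁻¹) = (X - C a) * (X - C a⁻¹) := by
  have h : C a * C a⁻¹ = (1 : M[X]) := by rw [← C_mul, mul_inv_cancel₀ ha, C_1]
  rw [reciprocalQuadratic, C_add]
  linear_combination -h

lemma prodRootsEval_reciprocalQuadratic_add_inv {a : M} (ha : a ≠ 0) (Q : M[X]) :
    prodRootsEval (reciprocalQuadratic (a + a⁻¹)) Q = Q.eval a * Q.eval a⁻¹ := by
  rw [reciprocalQuadratic_add_inv ha, prodRootsEval_mul_left
    (mul_ne_zero (X_sub_C_ne_zero a) (X_sub_C_ne_zero a⁻¹)), prodRootsEval_X_sub_C,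
    prodRootsEval_X_sub_C]

lemma eval_one_mul_eval_neg_one_prod_reciprocalQuadratic (S : Multiset M) :
    (S.map reciprocalQuadratic).prod.eval 1 * (S.map reciprocalQuadratic).prod.eval (-1) =
      (S.map fun s => 4 - s ^ 2).prod := by
  simp only [eval_multiset_prod, Multiset.map_map, Function.comp_def, ← Multiset.prod_map_mul]
  congr 1
  refine Multiset.map_congr rfl fun s _ => ?_
  simp only [reciprocalQuadratic, eval_add, eval_sub, eval_mul, eval_pow, eval_X, eval_C, eval_one]
  ring

variable [IsAlgClosed M]

lemma exists_ne_zero_add_inv_eq (s : M) : ∃ a ≠ 0, a + a⁻¹ = s := by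
  obtain ⟨a, ha⟩ := IsAlgClosed.exists_root (reciprocalQuadratic s)
    (degree_ne_of_natDegree_ne (by simp [natDegree_reciprocalQuadratic]))
  have hroot : a ^ 2 - s * a + 1 = 0 := by simpa [reciprocalQuadratic] using ha
  have ha0 : a ≠ 0 := by rintro rfl; simp at hroot
  refine ⟨a, ha0, ?_⟩
  field_simp
  linear_combination hroot

lemma prodRootsEval_reciprocalQuadratic (s t : M) :
    prodRootsEval (reciprocalQuadratic s) (reciprocalQuadratic t) = (s - t) ^ 2 := by
  obtain ⟨a, ha, rfl⟩ := exists_ne_zero_add_inv_eq s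
  rw [prodRootsEval_reciprocalQuadratic_add_inv ha]
  simp only [reciprocalQuadratic, eval_add, eval_sub, eval_mul, eval_pow, eval_X, eval_C, eval_one]
  field_simp
  ring

lemma prodRootsEval_derivative_reciprocalQuadratic (s : M) :
    prodRootsEval (reciprocalQuadratic s) (derivative (reciprocalQuadratic s)) = 4 - s ^ 2 := by
  obtain ⟨a, ha, rfl⟩ := exists_ne_zero_add_inv_eq s
  rw [prodRootsEval_reciprocalQuadratic_add_inv ha]
  simp only [reciprocalQuadratic, derivative_add, derivative_sub, derivative_X_sq,
    derivative_C_mul_X, derivative_one, eval_add, eval_sub, eval_mul, eval_X, eval_C, eval_zero]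
  field_simp
  ring

lemma prodRootsEval_derivative_prod_reciprocalQuadratic (S : Multiset M) :
    prodRootsEval (S.map reciprocalQuadratic).prod (derivative (S.map reciprocalQuadratic).prod) =
      (S.map fun s => 4 - s ^ 2).prod *
        prodRootsEval (S.map (X - C ·)).prod (derivative (S.map (X - C ·)).prod) ^ 2 := by
  induction S using Multiset.induction_on with
  | empty => simp [prodRootsEval]
  | cons s T ih =>
    have hT : ∀ t ∈ T, reciprocalQuadratic t ≠ 0 := fun t _ =>
      (reciprocalQuadratic_monic t).ne_zero
    have hprod : reciprocalQuadratic s * (T.map reciprocalQuadratic).prod ≠ 0 :=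
      ((reciprocalQuadratic_monic s).mul (monic_prod_reciprocalQuadratic T)).ne_zero
    rw [prodRootsEval_derivative_prod_X_sub_C_cons, Multiset.map_cons, Multiset.prod_cons,
      prodRootsEval_derivative_mul hprod, ih, prodRootsEval_derivative_reciprocalQuadratic,
      prodRootsEval_multiset_prod_right, prodRootsEval_multiset_prod_left _ _ hT]
    simp only [prodRootsEval_reciprocalQuadratic, Multiset.map_cons, Multiset.prod_cons,
      Multiset.prod_map_pow]
    ring

end ReciprocalQuadratic

-- `xⁿ g(x + 1/x)`, written without division
noncomputable def reciprocalOfTrace {R : Type*} [CommRing R] (g : R[X]) (n : ℕ) : R[X] :=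
  ∑ i ∈ Finset.range (n + 1), C (g.coeff i) * X ^ (n - i) * (X ^ 2 + 1) ^ i

lemma map_reciprocalOfTrace {R S : Type*} [CommRing R] [CommRing S] (φ : R →+* S) (g : R[X])
    (n : ℕ) : (reciprocalOfTrace g n).map φ = reciprocalOfTrace (g.map φ) n := by
  simp [reciprocalOfTrace, Polynomial.map_sum]

lemma eval_reciprocalOfTrace {K : Type*} [Field K] {g : K[X]} {n : ℕ} (hg : g.natDegree ≤ n)
    {x : K} (hx : x ≠ 0) : (reciprocalOfTrace g n).eval x = x ^ n * g.eval (x + x⁻¹) := by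
  rw [eval_eq_sum_range' (Nat.lt_succ_of_le hg), Finset.mul_sum, reciprocalOfTrace, eval_finsetSum]
  refine Finset.sum_congr rfl fun i hi => ?_
  have hi : i ≤ n := Nat.lt_succ_iff.mp (Finset.mem_range.mp hi)
  have hx2 : x ^ 2 + 1 = x * (x + x⁻¹) := by field_simp
  simp only [eval_mul, eval_C, eval_pow, eval_X, eval_add, eval_one, hx2, mul_pow]
  rw [← Nat.sub_add_cancel hi, pow_add, Nat.add_sub_cancel]
  ring

lemma reciprocalOfTrace_natDegree {M : Type*} [Field M] [IsAlgClosed M] (g : M[X]) :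
    reciprocalOfTrace g g.natDegree =
      C g.leadingCoeff * (g.roots.map reciprocalQuadratic).prod := by
  refine eq_of_infinite_eval_eq _ _ ((Set.finite_singleton 0).infinite_compl.mono fun x hx => ?_)
  have hx : x ≠ 0 := hx
  have hfactor : ∀ s, (reciprocalQuadratic s).eval x = x * (x + x⁻¹ - s) := fun s => by
    simp only [reciprocalQuadratic, eval_add, eval_sub, eval_mul, eval_pow, eval_X, eval_C,
      eval_one]
    field_simp
    ring
  simp only [Set.mem_ofPred_eq, eval_reciprocalOfTrace le_rfl hx, eval_mul, eval_C,
    eval_multiset_prod, Multiset.map_map, Function.comp_def, hfactor, Multiset.prod_map_mul,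
    Multiset.map_const', Multiset.prod_replicate, (IsAlgClosed.splits g).eval_eq_prod_roots,
    ← (IsAlgClosed.splits g).natDegree_eq_card_roots]
  ring

lemma map_reciprocalOfTrace_natDegree {K M : Type*} [Field K] [Field M] [IsAlgClosed M]
    (φ : K →+* M) (g : K[X]) :
    (reciprocalOfTrace g g.natDegree).map φ =
      C (φ g.leadingCoeff) * ((g.map φ).roots.map reciprocalQuadratic).prod := by
  rw [map_reciprocalOfTrace, ← natDegree_map φ, reciprocalOfTrace_natDegree, leadingCoeff_map]

lemma leadingCoeff_reciprocalOfTrace {K : Type*} [Field K] (g : K[X]) :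
    (reciprocalOfTrace g g.natDegree).leadingCoeff = g.leadingCoeff := by
  apply (algebraMap K (AlgebraicClosure K)).injective
  rw [← leadingCoeff_map, map_reciprocalOfTrace_natDegree, leadingCoeff_mul, leadingCoeff_C,
    (monic_prod_reciprocalQuadratic _).leadingCoeff, mul_one]

section Discriminant

variable {K : Type*} [Field K]

lemma polyDisc_eq_prodRootsEval (f : K[X]) :
    polyDisc f = (-1) ^ (f.natDegree * (f.natDegree - 1) / 2) *
      prodRootsEval (f.map (algebraMap K (AlgebraicClosure K)))
        (derivative (f.map (algebraMap K (AlgebraicClosure K)))) := by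
  simp only [polyDisc, prodRootsEval, aroots_def, derivative_map, eval_map, aeval_def]

lemma prodRootsEval_map_eq_resultant {L : Type*} [Field L] (φ : K →+* L) {P : K[X]}
    (hP : P.Monic) (hs : (P.map φ).Splits) (Q : K[X]) :
    prodRootsEval (P.map φ) (Q.map φ) = φ (resultant P Q) := by
  have h := resultant_eq_prod_eval (P.map φ) (Q.map φ) Q.natDegree natDegree_map_le hs
  rw [natDegree_map, resultant_map_map, leadingCoeff_map, hP.leadingCoeff, map_one, one_pow,
    one_mul] at h
  exact h.symm

lemma polyDisc_eq_algebraMap {g : K[X]} (hg : g.Monic) :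
    polyDisc g = algebraMap K (AlgebraicClosure K)
      ((-1) ^ (g.natDegree * (g.natDegree - 1) / 2) * resultant g (derivative g)) := by
  rw [polyDisc_eq_prodRootsEval, derivative_map,
    prodRootsEval_map_eq_resultant _ hg (IsAlgClosed.splits _), map_mul, map_pow, map_neg, map_one]

lemma neg_one_pow_two_mul_choose_two {R : Type*} [Monoid R] [HasDistribNeg R] (n : ℕ) :
    (-1 : R) ^ (2 * n * (2 * n - 1) / 2) = (-1) ^ n := by
  rw [mul_assoc, Nat.mul_div_cancel_left _ two_pos, pow_mul]
  rcases n.even_or_odd with hn | hn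
  · rw [hn.neg_one_pow, one_pow]
  · rw [hn.neg_one_pow, Odd.neg_one_pow ⟨n - 1, by have := hn.pos; omega⟩]

lemma polyDisc_reciprocalOfTrace {g : K[X]} (hg : g.Monic) :
    polyDisc (reciprocalOfTrace g g.natDegree) =
      algebraMap K (AlgebraicClosure K) ((-1) ^ g.natDegree *
        (reciprocalOfTrace g g.natDegree).eval 1 * (reciprocalOfTrace g g.natDegree).eval (-1)) *
        polyDisc g ^ 2 := by
  set φ := algebraMap K (AlgebraicClosure K)
  set S := (g.map φ).roots
  have hfS : (reciprocalOfTrace g g.natDegree).map φ = (S.map reciprocalQuadratic).prod := by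
    rw [map_reciprocalOfTrace_natDegree, hg.leadingCoeff, map_one, C_1, one_mul]
  have hgS : g.map φ = (S.map (X - C ·)).prod :=
    (IsAlgClosed.splits _).eq_prod_roots_of_monic (hg.map φ)
  have hcard : Multiset.card S = g.natDegree := by
    rw [← (IsAlgClosed.splits _).natDegree_eq_card_roots, natDegree_map]
  have hdeg : (reciprocalOfTrace g g.natDegree).natDegree = 2 * g.natDegree := by
    rw [← natDegree_map φ, hfS, natDegree_prod_reciprocalQuadratic, hcard]
  have hf1 : φ ((reciprocalOfTrace g g.natDegree).eval 1 *
      (reciprocalOfTrace g g.natDegree).eval (-1)) = (S.map fun s => 4 - s ^ 2).prod := by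
    rw [← eval_one_mul_eval_neg_one_prod_reciprocalQuadratic, ← hfS, map_mul, ← eval_map_apply,
      ← eval_map_apply, map_neg, map_one]
  rw [polyDisc_eq_prodRootsEval, hdeg, neg_one_pow_two_mul_choose_two, hfS,
    prodRootsEval_derivative_prod_reciprocalQuadratic, ← hgS, ← hf1, polyDisc_eq_prodRootsEval g,
    mul_pow, ← pow_mul, mul_comm _ 2, pow_mul, neg_one_sq, one_pow, one_mul]
  simp only [map_mul, map_pow, map_neg, map_one]
  ring

end Discriminant

theorem disc_reciprocal_trace_general {K : Type*} [Field K] (n : ℕ)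
    (f g : Polynomial K) (hf : f.Monic) (hg : g.natDegree = n)
    (htr : f = ∑ i ∈ Finset.range (n + 1), C (g.coeff i) * X ^ (n - i) * (X ^ 2 + 1) ^ i) :
    (∃ c : K, c ≠ 0 ∧
        polyDisc f =
          algebraMap K (AlgebraicClosure K) ((-1) ^ n * f.eval 1 * f.eval (-1) * c ^ 2) *
            polyDisc g ^ 2) ∧
      ((∃ t : K, (-1 : K) ^ n * f.eval 1 * f.eval (-1) = t ^ 2) →
        ∃ u : K, polyDisc f = algebraMap K (AlgebraicClosure K) u ^ 2) := by
  subst hg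
  change f = reciprocalOfTrace g g.natDegree at htr
  have hgm : g.Monic := by rw [Monic, ← leadingCoeff_reciprocalOfTrace, ← htr, hf.leadingCoeff]
  have hdisc := polyDisc_reciprocalOfTrace hgm
  rw [← htr] at hdisc
  refine ⟨⟨1, one_ne_zero, by rwa [one_pow, mul_one]⟩, fun ⟨t, ht⟩ =>
    ⟨t * ((-1) ^ (g.natDegree * (g.natDegree - 1) / 2) * resultant g (derivative g)), ?_⟩⟩
  rw [hdisc, polyDisc_eq_algebraMap hgm, ht, ← map_pow, ← map_mul, ← map_pow]
  congr 1
  ring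

/-- Let `f` be a monic reciprocal polynomial of even degree `2n` over a field of characteristic
`≠ 2`, with trace polynomial `g` of degree `n` (so `f(x) = xⁿ g(x + 1/x)`). Then
`disc(f) = (-1)ⁿ f(1) f(-1) · disc(g)²` up to a nonzero square in `K`; in particular, if
`(-1)ⁿ f(1) f(-1)` is a square in `K`, then `disc(f)` is a square in `K`. -/
theorem disc_reciprocal_trace {K : Type*} [Field K] (hchar : (2 : K) ≠ 0) (n : ℕ)
    (f g : Polynomial K) (hf : f.Monic) (hdeg : f.natDegree = 2 * n)
    (hrec : f.reverse = f) (hg : g.natDegree = n)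
    (htr : f = ∑ i ∈ Finset.range (n + 1), C (g.coeff i) * X ^ (n - i) * (X ^ 2 + 1) ^ i) :
    (∃ c : K, c ≠ 0 ∧
        polyDisc f =
          algebraMap K (AlgebraicClosure K) ((-1) ^ n * f.eval 1 * f.eval (-1) * c ^ 2) *
            polyDisc g ^ 2) ∧
      ((∃ t : K, (-1 : K) ^ n * f.eval 1 * f.eval (-1) = t ^ 2) →
        ∃ u : K, polyDisc f = algebraMap K (AlgebraicClosure K) u ^ 2) :=
  disc_reciprocal_trace_general n f g hf hg htr
end
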